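/- arXiv:1905.09428 — 2 statements merged into one kernel-verified Lean document; each statement's English description precedes it below -/
import Mathlib

section
/- Suppose q_n -> 2+ and tau_n = C^{1/(q_n-2)} for a constant C > 1 (so tau_n -> +infinity). If t_n >= 1 + tau_n^{-3/2} for all n, then (q_n - 2)^{3/2} * tau_n^2 * (t_n^{q_n - 2} - 1) -> +infinity. -/
open Filter

theorem stmt_10 (C : ℝ) (hC : 1 < C) (q : ℕ → ℝ) (hq2 : ∀ n, 2 < q n)
    (hq : Tendsto q atTop (nhds 2))
    (τ : ℕ → ℝ) (hτ : ∀ n, τ n = C ^ (1 / (q n - 2)))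
    (t : ℕ → ℝ) (ht : ∀ n, 1 + (τ n) ^ (-(3 / 2) : ℝ) ≤ t n) :
    Tendsto (fun n => (q n - 2) ^ ((3 : ℝ) / 2) * (τ n) ^ 2 *
      ((t n) ^ (q n - 2) - 1)) atTop atTop := by
  have hC0 : (0:ℝ) < C := lt_trans one_pos hC
  have hlogC : 0 < Real.log C := Real.log_pos hC
  set c := Real.log C / 2 with hc
  have hcpos : 0 < c := by positivity
  have hε : ∀ n, 0 < q n - 2 := fun n => by linarith [hq2 n]
  have hτ1 : ∀ n, 1 < τ n := by
    intro n
    rw [hτ n, Real.one_lt_rpow_iff_of_pos hC0]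
    exact Or.inl ⟨hC, by have := hε n; positivity⟩
  -- the lower bound
  have key : ∀ n, c ^ ((5:ℝ)/2) / 2 * (Real.exp (c / (q n - 2)) / (c / (q n - 2)) ^ ((5:ℝ)/2)) ≤
      (q n - 2) ^ ((3 : ℝ) / 2) * (τ n) ^ 2 * ((t n) ^ (q n - 2) - 1) := by
    intro n
    have hε0 : 0 < q n - 2 := hε n
    set ε := q n - 2 with hεdef
    have hτpos : 0 < τ n := lt_trans one_pos (hτ1 n)
    set x := (τ n) ^ (-(3/2):ℝ) with hxdef
    have hx0 : 0 < x := Real.rpow_pos_of_pos hτpos _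
    have hx1 : x < 1 := Real.rpow_lt_one_of_one_lt_of_neg (hτ1 n) (by norm_num)
    have h1x : (0:ℝ) < 1 + x := by linarith
    have hlog : x / 2 ≤ Real.log (1 + x) := by
      have h := Real.log_le_sub_one_of_pos (x := (1+x)⁻¹) (by positivity)
      rw [Real.log_inv] at h
      have h2 : x / (1+x) ≤ Real.log (1+x) := by
        have e : (1+x)⁻¹ - 1 = -(x/(1+x)) := by field_simp; ring
        linarith [e ▸ h]
      have h3 : x/2 ≤ x/(1+x) := by
        apply div_le_div_of_nonneg_left hx0.le h1x (by linarith)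
      linarith
    have h2 : 1 + ε * (x/2) ≤ (1+x) ^ ε := by
      have hrw : (1+x) ^ ε = Real.exp (Real.log (1+x) * ε) := Real.rpow_def_of_pos h1x ε
      have he := Real.add_one_le_exp (Real.log (1+x) * ε)
      nlinarith [mul_le_mul_of_nonneg_right hlog hε0.le]
    have h3 : (1+x)^ε ≤ (t n)^ε := Real.rpow_le_rpow h1x.le (ht n) hε0.le
    have h4 : ε * x / 2 ≤ (t n)^ε - 1 := by nlinarith
    have h5 : ε^((3:ℝ)/2) * (τ n)^2 * (ε * x / 2) ≤ ε^((3:ℝ)/2) * (τ n)^2 * ((t n)^ε - 1) :=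
      mul_le_mul_of_nonneg_left h4 (by positivity)
    refine le_trans (le_of_eq ?_) h5
    -- the equality
    have e1 : ε ^ ((3:ℝ)/2) * ε = ε ^ ((5:ℝ)/2) := by
      rw [← Real.rpow_add_one hε0.ne']
      norm_num
    have e2 : (τ n)^2 * x = (τ n) ^ ((1:ℝ)/2) := by
      rw [hxdef, show (τ n)^2 = (τ n) ^ ((2:ℕ):ℝ) from (Real.rpow_natCast _ 2).symm,
        ← Real.rpow_add hτpos]
      norm_num
    have e3 : (τ n) ^ ((1:ℝ)/2) = Real.exp (c / ε) := by
      rw [hτ n, ← Real.rpow_mul hC0.le, Real.rpow_def_of_pos hC0, hc]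
      congr 1
      field_simp
      exact div_self hε0.ne'
    have e4 : (c / ε) ^ ((5:ℝ)/2) = c ^ ((5:ℝ)/2) / ε ^ ((5:ℝ)/2) :=
      Real.div_rpow hcpos.le hε0.le _
    have hεr : (0:ℝ) < ε ^ ((5:ℝ)/2) := Real.rpow_pos_of_pos hε0 _
    have hcr : (0:ℝ) < c ^ ((5:ℝ)/2) := Real.rpow_pos_of_pos hcpos _
    rw [e4, ← e3]
    have : ε ^ ((3:ℝ)/2) * (τ n)^2 * (ε * x / 2)
        = (ε ^ ((3:ℝ)/2) * ε) * ((τ n)^2 * x) / 2 := by ring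
    rw [this, e1, e2]
    field_simp
  refine tendsto_atTop_mono key ?_
  have hv : Tendsto (fun n => c / (q n - 2)) atTop atTop := by
    apply Tendsto.const_mul_atTop hcpos
    apply tendsto_inv_nhdsGT_zero.comp
    apply tendsto_nhdsWithin_of_tendsto_nhds_of_eventually_within
    · have := hq.sub_const 2
      simpa using this
    · exact Eventually.of_forall fun n => hε n
  have := (tendsto_exp_div_rpow_atTop ((5:ℝ)/2)).comp hv
  apply Tendsto.const_mul_atTop (by positivity : (0:ℝ) < c ^ ((5:ℝ)/2) / 2) this
end

section
/- Let q_k -> 2+, a in (0, a*), a*_q -> a* as q -> 2+, tau_q = (2 a*_q/(qa))^{1/(q-2)}, and suppose C1 * (q_k - 2) * tau_{q_k}^2 <= G_k <= tau_{q_k}^2 + C2/(q_k - 2) for positive constants C1, C2, where G_k > 0. Then G_k^{(2-q_k)/2} -> a/a* as k -> infinity. -/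
open Filter

private lemma exp_ge_sq_div_four (x : ℝ) (hx : 0 ≤ x) : x ^ 2 / 4 ≤ Real.exp x := by
  have h := Real.add_one_le_exp (x / 2)
  have h2 : Real.exp (x / 2) ^ 2 = Real.exp x := by
    rw [sq, ← Real.exp_add]; ring_nf
  nlinarith [Real.exp_pos (x / 2)]

theorem stmt_14 (a astar C1 C2 : ℝ) (ha : 0 < a) (hastar : a < astar)
    (hC1 : 0 < C1) (hC2 : 0 < C2)
    (q : ℕ → ℝ) (hq2 : ∀ k, 2 < q k) (hq : Tendsto q atTop (nhds 2))
    (aq : ℕ → ℝ) (haq : Tendsto aq atTop (nhds astar))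
    (τ : ℕ → ℝ) (hτ : ∀ k, τ k = (2 * aq k / (q k * a)) ^ (1 / (q k - 2)))
    (G : ℕ → ℝ) (hGpos : ∀ k, 0 < G k)
    (hlow : ∀ k, C1 * (q k - 2) * (τ k) ^ 2 ≤ G k)
    (hup : ∀ k, G k ≤ (τ k) ^ 2 + C2 / (q k - 2)) :
    Tendsto (fun k => (G k) ^ ((2 - q k) / 2)) atTop (nhds (a / astar)) := by
  have ha' : (0:ℝ) < astar := ha.trans hastar
  set s : ℕ → ℝ := fun k => q k - 2 with hsdef
  set b : ℕ → ℝ := fun k => 2 * aq k / (q k * a) with hbdef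
  have hs0 : ∀ k, 0 < s k := fun k => sub_pos.2 (hq2 k)
  have hstend : Tendsto s atTop (nhds 0) := by
    have := hq.sub (tendsto_const_nhds (x := (2:ℝ)))
    simpa using this
  have hsW : Tendsto s atTop (nhdsWithin 0 (Set.Ioi 0)) :=
    tendsto_nhdsWithin_of_tendsto_nhds_of_eventually_within _ hstend
      (Eventually.of_forall hs0)
  have hinv : Tendsto (fun k => (s k)⁻¹) atTop atTop :=
    tendsto_inv_nhdsGT_zero.comp hsW
  -- b tends to astar / a > 1
  have hbtend : Tendsto b atTop (nhds (astar / a)) := by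
    have h1 : Tendsto (fun k => 2 * aq k) atTop (nhds (2 * astar)) := haq.const_mul 2
    have h2 : Tendsto (fun k => q k * a) atTop (nhds (2 * a)) := hq.mul_const a
    have h3 := h1.div h2 (by positivity)
    rwa [mul_div_mul_left astar a two_ne_zero] at h3
  have hb1 : (1:ℝ) < astar / a := (one_lt_div ha).2 hastar
  have hbev : ∀ᶠ k in atTop, 1 < b k := hbtend.eventually (eventually_gt_nhds hb1)
  have hlogb : Tendsto (fun k => Real.log (b k)) atTop (nhds (Real.log (astar / a))) :=
    hbtend.log (by positivity)
  set c : ℝ := Real.log (astar / a) / 2 with hcdef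
  have hc0 : 0 < c := by
    have := Real.log_pos hb1
    positivity
  have hcev : ∀ᶠ k in atTop, c < Real.log (b k) :=
    hlogb.eventually (eventually_gt_nhds (by linarith [Real.log_pos hb1]))
  -- key eventual facts on tau
  have hkey : ∀ᶠ k in atTop, 1 < b k ∧ c < Real.log (b k) := hbev.and hcev
  -- A = s * τ² tends to infinity
  have hAineq : ∀ᶠ k in atTop, c ^ 2 * (s k)⁻¹ ≤ s k * (τ k) ^ 2 := by
    filter_upwards [hkey] with k ⟨hb, hcb⟩
    have hbpos : 0 < b k := lt_trans one_pos hb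
    have hτpos : 0 < τ k := by rw [hτ k]; exact Real.rpow_pos_of_pos hbpos _
    have hlogτ : Real.log (τ k) = (1 / s k) * Real.log (b k) := by
      rw [hτ k, Real.log_rpow hbpos]
    have hτ2 : (τ k) ^ 2 = Real.exp (2 * Real.log (τ k)) := by
      rw [two_mul, Real.exp_add, Real.exp_log hτpos, sq]
    have hsk := hs0 k
    have hx : (0:ℝ) ≤ 2 * (1 / s k) * c := by positivity
    have h1 : (2 * (1 / s k) * c) ^ 2 / 4 ≤ Real.exp (2 * (1 / s k) * c) :=
      exp_ge_sq_div_four _ hx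
    have h2 : Real.exp (2 * (1 / s k) * c) ≤ (τ k) ^ 2 := by
      rw [hτ2, hlogτ]
      apply Real.exp_le_exp.2
      have : 0 < 1 / s k := by positivity
      nlinarith
    have h3 : c ^ 2 * (s k)⁻¹ = s k * ((2 * (1 / s k) * c) ^ 2 / 4) := by
      field_simp
      ring
    calc c ^ 2 * (s k)⁻¹ = s k * ((2 * (1 / s k) * c) ^ 2 / 4) := h3
      _ ≤ s k * Real.exp (2 * (1 / s k) * c) :=
          mul_le_mul_of_nonneg_left h1 hsk.le
      _ ≤ s k * (τ k) ^ 2 := mul_le_mul_of_nonneg_left h2 hsk.le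
  have hA : Tendsto (fun k => s k * (τ k) ^ 2) atTop atTop :=
    tendsto_atTop_mono' atTop hAineq (hinv.const_mul_atTop (by positivity))
  have hC2A : Tendsto (fun k => C2 / (s k * (τ k) ^ 2)) atTop (nhds 0) :=
    tendsto_const_nhds.div_atTop hA
  -- log(1 + C2/A) → 0
  have hlog1 : Tendsto (fun k => Real.log (1 + C2 / (s k * (τ k) ^ 2))) atTop (nhds 0) := by
    have h := ((tendsto_const_nhds (x := (1:ℝ))).add hC2A).log (by norm_num)
    simpa using h
  have hhalf : Tendsto (fun k => -(s k) / 2) atTop (nhds 0) := by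
    have := (hstend.neg).div_const 2
    simpa using this
  -- lower bound sequence
  have hlo : Tendsto (fun k => -Real.log (b k)
      + (-(s k) / 2) * Real.log (1 + C2 / (s k * (τ k) ^ 2))) atTop
      (nhds (Real.log (a / astar))) := by
    have := (hlogb.neg).add (hhalf.mul hlog1)
    have heq : Real.log (a / astar) = -Real.log (astar / a) + 0 * 0 := by
      rw [← Real.log_inv, inv_div]; ring
    rwa [← heq] at this
  -- s * log s → 0
  have hslogs : Tendsto (fun k => Real.log (s k) * s k) atTop (nhds 0) := by
    have h := (tendsto_log_mul_rpow_nhdsGT_zero (r := 1) one_pos).comp hsW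
    simp only [Function.comp_def, Real.rpow_one] at h
    exact h
  -- upper bound sequence
  have hhi : Tendsto (fun k => (-(s k) / 2) * Real.log (C1 * s k)
      + -Real.log (b k)) atTop (nhds (Real.log (a / astar))) := by
    have h1 : Tendsto (fun k => (-(s k) / 2) * Real.log (C1 * s k)) atTop (nhds 0) := by
      have heq : ∀ k, (-(s k) / 2) * Real.log (C1 * s k)
          = (-(s k) / 2) * Real.log C1 + (-(1:ℝ) / 2) * (Real.log (s k) * s k) := by
        intro k
        rw [Real.log_mul hC1.ne' (hs0 k).ne']
        ring
      rw [show (0:ℝ) = 0 * Real.log C1 + (-(1:ℝ)/2) * 0 by ring]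
      simp only [heq]
      exact ((hhalf.mul_const _).add (hslogs.const_mul _))
    have := h1.add hlogb.neg
    have heq : Real.log (a / astar) = 0 + -Real.log (astar / a) := by
      rw [← Real.log_inv, inv_div]; ring
    rwa [← heq] at this
  -- squeeze for the log quantity
  have hmain : Tendsto (fun k => ((2 - q k) / 2) * Real.log (G k)) atTop
      (nhds (Real.log (a / astar))) := by
    apply tendsto_of_tendsto_of_tendsto_of_le_of_le' hlo hhi
    · filter_upwards [hkey] with k ⟨hb, hcb⟩
      have hbpos : 0 < b k := lt_trans one_pos hb
      have hτpos : 0 < τ k := by rw [hτ k]; exact Real.rpow_pos_of_pos hbpos _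
      have hsk := hs0 k
      have hlogτ : Real.log (τ k) = (1 / s k) * Real.log (b k) := by
        rw [hτ k, Real.log_rpow hbpos]
      have hApos : 0 < s k * (τ k) ^ 2 := by positivity
      have hsplit : (τ k) ^ 2 + C2 / s k = (τ k) ^ 2 * (1 + C2 / (s k * (τ k) ^ 2)) := by
        field_simp
      have hlogG : Real.log (G k) ≤ Real.log ((τ k) ^ 2 + C2 / s k) :=
        Real.log_le_log (hGpos k) (hup k)
      have hmul : ((2 - q k) / 2) * Real.log ((τ k) ^ 2 + C2 / s k)
          ≤ ((2 - q k) / 2) * Real.log (G k) := by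
        apply mul_le_mul_of_nonpos_left hlogG
        have := hq2 k; linarith
      refine le_trans (le_of_eq ?_) hmul
      rw [hsplit, Real.log_mul (by positivity) (by positivity),
        show Real.log ((τ k)^2) = 2 * Real.log (τ k) by
          rw [Real.log_pow]; push_cast; ring,
        hlogτ]
      have hq2k : (2 - q k) / 2 = -(s k) / 2 := by show (2 - q k) / 2 = -(q k - 2) / 2; ring
      rw [hq2k]
      field_simp
      ring
    · filter_upwards [hkey] with k ⟨hb, hcb⟩
      have hbpos : 0 < b k := lt_trans one_pos hb
      have hτpos : 0 < τ k := by rw [hτ k]; exact Real.rpow_pos_of_pos hbpos _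
      have hsk := hs0 k
      have hlogτ : Real.log (τ k) = (1 / s k) * Real.log (b k) := by
        rw [hτ k, Real.log_rpow hbpos]
      have hlogG : Real.log (C1 * s k * (τ k) ^ 2) ≤ Real.log (G k) :=
        Real.log_le_log (by positivity) (hlow k)
      have hmul : ((2 - q k) / 2) * Real.log (G k)
          ≤ ((2 - q k) / 2) * Real.log (C1 * s k * (τ k) ^ 2) := by
        apply mul_le_mul_of_nonpos_left hlogG
        have := hq2 k; linarith
      refine le_trans hmul (le_of_eq ?_)
      rw [Real.log_mul (by positivity) (by positivity),
        show Real.log ((τ k)^2) = 2 * Real.log (τ k) by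
          rw [Real.log_pow]; push_cast; ring,
        hlogτ]
      have hq2k : (2 - q k) / 2 = -(s k) / 2 := by show (2 - q k) / 2 = -(q k - 2) / 2; ring
      rw [hq2k]
      field_simp
      ring
  -- conclude via exp
  have hexp := (Real.continuous_exp.tendsto _).comp hmain
  have heq : ∀ k, (G k) ^ ((2 - q k) / 2)
      = Real.exp (((2 - q k) / 2) * Real.log (G k)) := fun k => by
    rw [Real.rpow_def_of_pos (hGpos k), mul_comm]
  rw [Real.exp_log (by positivity)] at hexp
  simpa only [Function.comp_def, heq] using hexp
end
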